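/- arXiv:2401.11991 — 3 statements merged into one kernel-verified Lean document; each statement's English description precedes it below -/
import Mathlib

section
/- Let V be a finite nonempty type and f : V → V. Suppose the simple graph on V in which two distinct vertices u and v are adjacent if and only if f u = v or f v = u (the underlying undirected graph of the functional digraph of f) is connected. Then any two periodic points of f lie on the same cycle: if f^[j] u = u for some j ≥ 1 and f^[k] v = v for some k ≥ 1, then there exists m ≥ 0 with f^[m] u = v. (Equivalently, every weakly connected component of a digraph in which every vertex has out-degree exactly one contains at most one directed cycle.) -/
/-- Let `V` be a finite nonempty type and `f : V → V`. If the simple graph on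
`V` in which two distinct vertices `u, v` are adjacent iff `f u = v` or `f v = u` (the underlying
undirected graph of the functional digraph of `f`) is connected, then any two periodic points of
`f` lie on the same cycle: if `f^[j] u = u` for some `j ≥ 1` and `f^[k] v = v` for some `k ≥ 1`,
then `f^[m] u = v` for some `m ≥ 0`. -/
theorem functional_digraph_connected_periodic_same_cycle
    {V : Type*} [Fintype V] [Nonempty V] (f : V → V)
    (hconn : (SimpleGraph.fromRel (fun u v => f u = v ∨ f v = u)).Connected)
    (u v : V) (j k : ℕ) (hj : 1 ≤ j) (hk : 1 ≤ k)
    (hu : f^[j] u = u) (hv : f^[k] v = v) :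
    ∃ m : ℕ, f^[m] u = v := by
  have key : ∀ {a b : V},
      (SimpleGraph.fromRel (fun u v => f u = v ∨ f v = u)).Reachable a b →
      ∃ m n : ℕ, f^[m] a = f^[n] b := by
    intro a b h
    obtain ⟨w⟩ := h
    induction w with
    | nil => exact ⟨0, 0, rfl⟩
    | @cons a c b hadj p ih =>
      obtain ⟨m, n, hmn⟩ := ih
      have case1 : f a = c → ∃ m n : ℕ, f^[m] a = f^[n] b := by
        intro hfa
        refine ⟨m + 1, n, ?_⟩
        rw [Function.iterate_add_apply, Function.iterate_one, hfa, hmn]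
      have case2 : f c = a → ∃ m n : ℕ, f^[m] a = f^[n] b := by
        intro hfc
        refine ⟨m, n + 1, ?_⟩
        calc f^[m] a = f^[m] (f c) := by rw [hfc]
          _ = f^[m + 1] c := by rw [Function.iterate_add_apply, Function.iterate_one]
          _ = f^[1 + m] c := by rw [Nat.add_comm]
          _ = f (f^[m] c) := by rw [Function.iterate_add_apply, Function.iterate_one]
          _ = f (f^[n] b) := by rw [hmn]
          _ = f^[1 + n] b := by rw [Function.iterate_add_apply, Function.iterate_one]
          _ = f^[n + 1] b := by rw [Nat.add_comm]
      rcases hadj with ⟨-, (h | h) | (h | h)⟩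
      exacts [case1 h, case2 h, case2 h, case1 h]
  obtain ⟨m, n, hmn⟩ := key (hconn u v)
  have hkn : f^[k * n] v = v := by
    rw [Function.iterate_mul]
    exact Function.iterate_fixed hv n
  refine ⟨(k * n - n) + m, ?_⟩
  have hle : n ≤ k * n := Nat.le_mul_of_pos_left n (by omega)
  rw [Function.iterate_add_apply, hmn, ← Function.iterate_add_apply,
    Nat.sub_add_cancel hle, hkn]
end

section
/- Let V be a finite type with at least two elements and f : V → V a function with f v ≠ v for all v. Suppose the simple graph on V in which two distinct vertices u and v are adjacent if and only if f u = v or f v = u is connected. Then the following are equivalent: (i) f has no periodic point of period at least 3, i.e., every v with f^[k] v = v for some k ≥ 1 satisfies f (f v) = v; (ii) there exists exactly one unordered pair {u, v} of distinct elements of V with f u = v and f v = u. -/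
private lemma reach_merge {V : Type*} (f : V → V) {u v : V}
    (h : (SimpleGraph.fromRel (fun a b => f a = b ∨ f b = a)).Reachable u v) :
    ∃ m n : ℕ, f^[m] u = f^[n] v := by
  obtain ⟨w⟩ := h
  induction w with
  | nil => exact ⟨0, 0, rfl⟩
  | @cons a b c hab p ih =>
    obtain ⟨m, n, hmn⟩ := ih
    rw [SimpleGraph.fromRel_adj] at hab
    rcases hab.2 with (h | h) | (h | h)
    · exact ⟨m + 1, n, by rw [Function.iterate_succ_apply, h, hmn]⟩
    · refine ⟨m, n + 1, ?_⟩
      rw [← h, ← Function.iterate_succ_apply, Function.iterate_succ_apply', hmn]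
      exact (Function.iterate_succ_apply' f n c).symm
    · refine ⟨m, n + 1, ?_⟩
      rw [← h, ← Function.iterate_succ_apply, Function.iterate_succ_apply', hmn]
      exact (Function.iterate_succ_apply' f n c).symm
    · exact ⟨m + 1, n, by rw [Function.iterate_succ_apply, h, hmn]⟩

private lemma pair_iter {V : Type*} {f : V → V} {u v : V} (hu : f u = v) (hv : f v = u) :
    ∀ n, f^[n] u = u ∨ f^[n] u = v := by
  intro n
  induction n with
  | zero => exact Or.inl rfl
  | succ n ih =>
    rcases ih with h | h <;> rw [Function.iterate_succ_apply', h]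
    · exact Or.inr hu
    · exact Or.inl hv

/-- Let `V` be a finite type with at least two elements and `f : V → V` with
`f v ≠ v` for all `v`. Suppose the simple graph on `V` in which two distinct vertices `u, v` are
adjacent iff `f u = v` or `f v = u` is connected. Then the following are equivalent:
(i) every periodic point of `f` has period at most 2 (no directed cycle of length ≥ 3), i.e.
every `v` with `f^[k] v = v` for some `k ≥ 1` satisfies `f (f v) = v`; and
(ii) there is exactly one unordered pair `{u, v}` of distinct elements with `f u = v` and
`f v = u`. -/
theorem functional_digraph_no_bad_cycle_iff_unique_core_pair
    {V : Type*} [Fintype V] (hcard : 2 ≤ Fintype.card V)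
    (f : V → V) (hf : ∀ v, f v ≠ v)
    (hconn : (SimpleGraph.fromRel (fun u v => f u = v ∨ f v = u)).Connected) :
    (∀ v : V, (∃ k : ℕ, 1 ≤ k ∧ f^[k] v = v) → f (f v) = v) ↔
      (∃ u v : V, u ≠ v ∧ f u = v ∧ f v = u ∧
        ∀ u' v' : V, u' ≠ v' → f u' = v' → f v' = u' →
          (u' = u ∧ v' = v) ∨ (u' = v ∧ v' = u)) := by
  have hmerge : ∀ u v : V, ∃ m n : ℕ, f^[m] u = f^[n] v := fun u v =>
    reach_merge f (hconn.preconnected u v)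
  constructor
  · intro hper
    have hne : Nonempty V := Fintype.card_pos_iff.mp (by omega)
    obtain ⟨v₀⟩ := hne
    obtain ⟨i, j, hij, hvij⟩ := Finite.exists_ne_map_eq_of_infinite (fun n : ℕ => f^[n] v₀)
    have key : ∀ i j : ℕ, i < j → f^[i] v₀ = f^[j] v₀ → ∃ w k, 1 ≤ k ∧ f^[k] w = w := by
      intro i j hlt h
      refine ⟨f^[i] v₀, j - i, by omega, ?_⟩
      rw [← Function.iterate_add_apply, show j - i + i = j from by omega]
      exact h.symm
    obtain ⟨w, k, hk1, hwk⟩ : ∃ w k, 1 ≤ k ∧ f^[k] w = w := by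
      rcases lt_or_gt_of_ne hij with h | h
      · exact key i j h hvij
      · exact key j i h hvij.symm
    have hffw : f (f w) = w := hper w ⟨k, hk1, hwk⟩
    refine ⟨w, f w, (hf w).symm, rfl, hffw, ?_⟩
    intro u' v' hne' hu' hv'
    obtain ⟨m, n, hmn⟩ := hmerge w u'
    have h1 := pair_iter rfl hffw m
    have h2 := pair_iter hu' hv' n
    rw [hmn] at h1
    rcases h1 with h1 | h1 <;> rcases h2 with h2 | h2
    · left
      have : u' = w := h2.symm.trans h1
      exact ⟨this, by rw [← hu', this]⟩
    · right
      have hvw : v' = w := h2.symm.trans h1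
      exact ⟨by rw [← hv', hvw], hvw⟩
    · right
      have : u' = f w := h2.symm.trans h1
      exact ⟨this, by rw [← hu', this, hffw]⟩
    · left
      have hvw : v' = f w := h2.symm.trans h1
      exact ⟨by rw [← hv', hvw, hffw], hvw⟩
  · rintro ⟨u, v, huv, hu, hv, -⟩ w ⟨k, hk, hwk⟩
    obtain ⟨m, n, hmn⟩ := hmerge w u
    have h2 := pair_iter hu hv n
    rw [← hmn] at h2
    have hmle : m ≤ k * (m + 1) := le_trans (Nat.le_succ m) (Nat.le_mul_of_pos_left _ hk)
    have hN : f^[k * (m + 1)] w = w := by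
      rw [Function.iterate_mul]
      exact Function.iterate_fixed hwk (m + 1)
    have hw : f^[k * (m + 1) - m] (f^[m] w) = w := by
      rw [← Function.iterate_add_apply, Nat.sub_add_cancel hmle]
      exact hN
    have hwuv : w = u ∨ w = v := by
      rcases h2 with h2 | h2
      · rw [h2] at hw
        rcases pair_iter hu hv (k * (m + 1) - m) with h | h
        · exact Or.inl (hw ▸ h.symm ▸ rfl)
        · exact Or.inr (hw ▸ h.symm ▸ rfl)
      · rw [h2] at hw
        rcases pair_iter hv hu (k * (m + 1) - m) with h | h
        · exact Or.inr (hw ▸ h.symm ▸ rfl)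
        · exact Or.inl (hw ▸ h.symm ▸ rfl)
    rcases hwuv with rfl | rfl
    · rw [hu, hv]
    · rw [hv, hu]
end

section
/- Let d ≥ 1 and γ ≥ 2 be integers, fix indices 1 ≤ a < b ≤ γ, and let H' be the rewired graph obtained from the layered graph H_{γ,d} by deleting the two edges {u¹_a, u¹_b} and {u^{2d+1}_a, u^{2d+1}_b} and adding the two edges {u¹_a, u^{2d+1}_b} and {u¹_b, u^{2d+1}_a}. Let T be the spanning subgraph of H_{γ,d} whose edges are {u⁰, u¹_j} for 1 ≤ j ≤ γ, {u¹_1, u²}, {uⁱ, u^{i+1}} for 2 ≤ i ≤ 2d−1, and {u^{2d}, u^{2d+1}_j} for 1 ≤ j ≤ γ. Then: (i) T is still a spanning tree of H'; (ii) dist_{H'}(u⁰, u^{2d+1}_a) = dist_{H'}(u⁰, u^{2d+1}_b) = 2; and (iii) dist_T(u⁰, u^{2d+1}_a) = 2d + 1 > d · dist_{H'}(u⁰, u^{2d+1}_a), so T is not a d-approximate BFS tree of H'. -/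
/-- The vertex type of the layered graph `H_{γ,d}`: one root vertex (level 0), `γ` vertices at
level 1, a single vertex at each level `2, …, 2d` (that is `2d - 1` vertices), and `γ` vertices
at level `2d + 1`. -/
abbrev LayerVert (γ d : ℕ) : Type := Fin 1 ⊕ Fin γ ⊕ Fin (2 * d - 1) ⊕ Fin γ

/-- The level of a vertex of `H_{γ,d}`. -/
def level (γ d : ℕ) : LayerVert γ d → ℕ
  | Sum.inl _ => 0
  | Sum.inr (Sum.inl _) => 1
  | Sum.inr (Sum.inr (Sum.inl i)) => i.1 + 2
  | Sum.inr (Sum.inr (Sum.inr _)) => 2 * d + 1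

/-- The index of a vertex inside its level (`0` for the single-vertex levels). -/
def idx (γ d : ℕ) : LayerVert γ d → ℕ
  | Sum.inl _ => 0
  | Sum.inr (Sum.inl j) => j.1
  | Sum.inr (Sum.inr (Sum.inl _)) => 0
  | Sum.inr (Sum.inr (Sum.inr j)) => j.1

/-- The layered graph `H_{γ,d}`: every vertex at level `i` is adjacent to every vertex at level
`i + 1` (for `0 ≤ i ≤ 2d`), and the `γ` vertices at level 1 as well as the `γ` vertices at level
`2d + 1` each form a clique. -/
def layeredGraph (γ d : ℕ) : SimpleGraph (LayerVert γ d) :=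
  SimpleGraph.fromRel (fun u v =>
    level γ d u + 1 = level γ d v ∨
      (level γ d u = level γ d v ∧ (level γ d u = 1 ∨ level γ d u = 2 * d + 1)))

instance (γ d : ℕ) : DecidableRel (layeredGraph γ d).Adj := fun u v =>
  decidable_of_iff _ (SimpleGraph.fromRel_adj _ u v).symm

/-- The root vertex `u⁰` of `H_{γ,d}`. -/
def lvRoot (γ d : ℕ) : LayerVert γ d := Sum.inl 0

/-- The level-1 vertex `u¹_j` of `H_{γ,d}` (0-indexed). -/
def lvOne (γ d : ℕ) (j : Fin γ) : LayerVert γ d := Sum.inr (Sum.inl j)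

/-- The level-`2d+1` vertex `u^{2d+1}_j` of `H_{γ,d}` (0-indexed). -/
def lvTop (γ d : ℕ) (j : Fin γ) : LayerVert γ d := Sum.inr (Sum.inr (Sum.inr j))

/-- The spanning subgraph `T` of `H_{γ,d}` with edges `{u⁰, u¹_j}` for all `j`, `{u¹_1, u²}`,
`{uⁱ, u^{i+1}}` for `2 ≤ i ≤ 2d − 1`, and `{u^{2d}, u^{2d+1}_j}` for all `j`. -/
def layeredTree (γ d : ℕ) : SimpleGraph (LayerVert γ d) :=
  SimpleGraph.fromRel (fun u v =>
    (level γ d u = 0 ∧ level γ d v = 1) ∨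
      (level γ d u = 1 ∧ idx γ d u = 0 ∧ level γ d v = 2) ∨
      (2 ≤ level γ d u ∧ level γ d u ≤ 2 * d - 1 ∧ level γ d v = level γ d u + 1) ∨
      (level γ d u = 2 * d ∧ level γ d v = 2 * d + 1))

/-- The rewired graph `H^{e,ẽ}` obtained from `H_{γ,d}` by deleting the clique edges
`{u¹_a, u¹_b}` and `{u^{2d+1}_a, u^{2d+1}_b}` and adding the crossing edges
`{u¹_a, u^{2d+1}_b}` and `{u¹_b, u^{2d+1}_a}`. -/
def rewiredGraph (γ d : ℕ) (a b : Fin γ) : SimpleGraph (LayerVert γ d) :=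
  ((layeredGraph γ d).deleteEdges
      {s(lvOne γ d a, lvOne γ d b), s(lvTop γ d a, lvTop γ d b)}) ⊔
    SimpleGraph.fromEdgeSet
      {s(lvOne γ d a, lvTop γ d b), s(lvOne γ d b, lvTop γ d a)}

/-! Every edge of `T` joins consecutive levels, and its lower endpoint has index `0` in its
level; since level and index determine a vertex, every vertex has at most one lower neighbour in
`T`. A vertex of maximal level on a cycle would have two, so `T` is acyclic. Every vertex other
than the root has a lower neighbour, so `dist_T(u⁰, v) = level v`, which is `2d + 1` on the top
level. The rewiring only touches edges inside levels `1` and `2d + 1`, so `T` survives it, while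
the new edge `{u¹_b, u^{2d+1}_a}` puts `u^{2d+1}_a` at distance `2` from the root. -/

namespace SimpleGraph

variable {V : Type*} {G : SimpleGraph V}

theorem isAcyclic_of_lower_adj_unique (f : V → ℕ) (hne : ∀ ⦃u v⦄, G.Adj u v → f u ≠ f v)
    (huniq : ∀ ⦃u v w⦄, G.Adj u w → G.Adj v w → f u < f w → f v < f w → u = v) :
    G.IsAcyclic := by
  classical
  intro x c hc
  obtain ⟨m, hm, hmax⟩ := c.support.toFinset.exists_max_image f ⟨x, by simp⟩
  rw [List.mem_toFinset] at hm
  set c' := c.rotate m hm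
  have hc' : c'.IsCycle := hc.rotate hm
  have hnil : ¬ c'.Nil := hc'.not_nil
  have hlt : ∀ y ∈ c'.support, G.Adj y m → f y < f m := fun y hy hadj =>
    lt_of_le_of_ne (hmax y (by simpa [c'] using hy)) (hne hadj)
  exact hc'.snd_ne_penultimate <| huniq (c'.adj_snd hnil).symm (c'.adj_penultimate hnil)
    (hlt _ (c'.getVert_mem_support 1) (c'.adj_snd hnil).symm)
    (hlt _ (c'.getVert_mem_support _) (c'.adj_penultimate hnil))

theorem Walk.le_add_length {f : V → ℕ} (hf : ∀ ⦃u v⦄, G.Adj u v → f v ≤ f u + 1) :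
    ∀ {u v : V} (p : G.Walk u v), f v ≤ f u + p.length
  | _, _, .nil => le_self_add
  | _, _, .cons h p => by
    have := hf h
    have := p.le_add_length hf
    rw [Walk.length_cons]
    omega

theorem exists_walk_length_eq_of_exists_lower_adj {f : V → ℕ} {r : V} (hr : f r = 0)
    (hlower : ∀ v ≠ r, ∃ u, G.Adj u v ∧ f u + 1 = f v) (v : V) :
    ∃ p : G.Walk r v, p.length = f v := by
  induction hn : f v using Nat.strong_induction_on generalizing v with
  | _ n ih =>
    by_cases hv : v = r
    · subst hv
      exact ⟨.nil, by simp [hr, ← hn]⟩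
    · obtain ⟨u, hadj, hu⟩ := hlower v hv
      obtain ⟨p, hp⟩ := ih (f u) (by omega) u rfl
      exact ⟨p.concat hadj, by simp only [Walk.length_concat, hp]; omega⟩

theorem dist_eq_of_exists_lower_adj {f : V → ℕ} {r : V} (hr : f r = 0)
    (hf : ∀ ⦃u v⦄, G.Adj u v → f v ≤ f u + 1)
    (hlower : ∀ v ≠ r, ∃ u, G.Adj u v ∧ f u + 1 = f v) (v : V) : G.dist r v = f v := by
  obtain ⟨p, hp⟩ := exists_walk_length_eq_of_exists_lower_adj hr hlower v
  obtain ⟨q, hq⟩ := p.reachable.exists_walk_length_eq_dist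
  have := q.le_add_length hf
  have := dist_le p
  omega

theorem dist_eq_two_of_not_adj {u v w : V} (huv : u ≠ v) (hn : ¬ G.Adj u v) (hw : G.Adj u w)
    (hw' : G.Adj w v) : G.dist u v = 2 := by
  rw [dist, edist_eq_two_iff.mpr ⟨huv, hn, w, (mem_commonNeighbors G).mpr ⟨hw, hw'.symm⟩⟩]
  rfl

end SimpleGraph

section LayeredGraph

open SimpleGraph

variable {γ d : ℕ}

theorem eq_of_level_eq_of_idx_eq (hd : 1 ≤ d) {u v : LayerVert γ d}
    (hlevel : level γ d u = level γ d v) (hidx : idx γ d u = idx γ d v) : u = v := by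
  rcases u with ⟨x, hx⟩ | j | ⟨i, hi⟩ | j <;>
    rcases v with ⟨x', hx'⟩ | j' | ⟨i', hi'⟩ | j' <;>
    simp only [level, idx, Sum.inl.injEq, Sum.inr.injEq, reduceCtorEq, Fin.ext_iff]
      at hlevel hidx ⊢ <;>
    omega

theorem layeredTree_adj_cases {u v : LayerVert γ d} (h : (layeredTree γ d).Adj u v) :
    (level γ d u + 1 = level γ d v ∧ idx γ d u = 0) ∨
      (level γ d v + 1 = level γ d u ∧ idx γ d v = 0) := by
  obtain ⟨-, h⟩ := (fromRel_adj _ u v).mp h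
  rcases u with x | j | ⟨i, hi⟩ | j <;> rcases v with x' | j' | ⟨i', hi'⟩ | j' <;>
    simp only [level, idx, true_and, and_true, true_or, or_true] at h ⊢ <;> omega

theorem layeredTree_isAcyclic (hd : 1 ≤ d) : (layeredTree γ d).IsAcyclic := by
  refine isAcyclic_of_lower_adj_unique (level γ d) (fun u v h => ?_)
    fun u v w hu hv hlu hlv => ?_
  · rcases layeredTree_adj_cases h with h | h <;> omega
  · rcases layeredTree_adj_cases hu with hu | hu <;>
      rcases layeredTree_adj_cases hv with hv | hv <;>
      first | omega | exact eq_of_level_eq_of_idx_eq hd (by omega) (hu.2.trans hv.2.symm)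

theorem layeredTree_exists_lower_adj (hγ : 0 < γ) (hd : 1 ≤ d) :
    ∀ v ≠ lvRoot γ d, ∃ u,
      (layeredTree γ d).Adj u v ∧ level γ d u + 1 = level γ d v := by
  rintro (x | j | ⟨i, hi⟩ | j) hv
  · exact absurd (congrArg Sum.inl (Subsingleton.elim x 0)) hv
  · exact ⟨Sum.inl 0,
      (fromRel_adj _ _ _).mpr ⟨Sum.inl_ne_inr, Or.inl (Or.inl ⟨rfl, rfl⟩)⟩, rfl⟩
  · by_cases hi0 : i = 0
    · refine ⟨Sum.inr (Sum.inl ⟨0, hγ⟩),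
        (fromRel_adj _ _ _).mpr ⟨ne_of_apply_ne (level γ d) ?_, Or.inl ?_⟩, ?_⟩ <;>
        simp only [level, idx, true_and] <;> omega
    · refine ⟨Sum.inr (Sum.inr (Sum.inl ⟨i - 1, by omega⟩)),
        (fromRel_adj _ _ _).mpr ⟨ne_of_apply_ne (level γ d) ?_, Or.inl ?_⟩, ?_⟩ <;>
        simp only [level, idx] <;> omega
  · refine ⟨Sum.inr (Sum.inr (Sum.inl ⟨2 * d - 2, by omega⟩)),
      (fromRel_adj _ _ _).mpr ⟨ne_of_apply_ne (level γ d) ?_, Or.inl ?_⟩, ?_⟩ <;>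
      simp only [level, idx, true_and, and_true] <;> omega

theorem layeredTree_dist_lvRoot (hγ : 0 < γ) (hd : 1 ≤ d) (v : LayerVert γ d) :
    (layeredTree γ d).dist (lvRoot γ d) v = level γ d v :=
  dist_eq_of_exists_lower_adj (f := level γ d) rfl
    (fun u v h => by rcases layeredTree_adj_cases h with h | h <;> omega)
    (layeredTree_exists_lower_adj hγ hd) v

theorem layeredTree_connected (hγ : 0 < γ) (hd : 1 ≤ d) : (layeredTree γ d).Connected :=
  (connected_iff_exists_forall_reachable _).mpr ⟨lvRoot γ d, fun v =>
    (exists_walk_length_eq_of_exists_lower_adj (f := level γ d) rfl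
      (layeredTree_exists_lower_adj hγ hd) v).elim fun p _ => p.reachable⟩

theorem rewiredGraph_adj_of_level_succ {a b : Fin γ} {u v : LayerVert γ d}
    (h : level γ d u + 1 = level γ d v) : (rewiredGraph γ d a b).Adj u v := by
  refine Or.inl ⟨⟨fun huv => by simp [huv] at h, Or.inl (Or.inl h)⟩, ?_⟩
  rintro (hs | hs) <;> rcases Sym2.eq_iff.mp hs with ⟨rfl, rfl⟩ | ⟨rfl, rfl⟩ <;>
    simp [lvOne, lvTop, level] at h

theorem layeredTree_le_rewiredGraph (a b : Fin γ) : layeredTree γ d ≤ rewiredGraph γ d a b :=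
  fun u v h => by
    rcases layeredTree_adj_cases h with h | h
    · exact rewiredGraph_adj_of_level_succ h.1
    · exact (rewiredGraph_adj_of_level_succ h.1).symm

theorem rewiredGraph_adj_cross (a b : Fin γ) :
    (rewiredGraph γ d a b).Adj (lvOne γ d a) (lvTop γ d b) ∧
      (rewiredGraph γ d a b).Adj (lvOne γ d b) (lvTop γ d a) := by
  simp [rewiredGraph, lvOne, lvTop]

theorem rewiredGraph_not_adj_lvRoot_lvTop (hd : 1 ≤ d) (a b j : Fin γ) :
    ¬ (rewiredGraph γ d a b).Adj (lvRoot γ d) (lvTop γ d j) := by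
  rintro (⟨⟨-, h⟩, -⟩ | ⟨h, -⟩)
  · simp only [lvRoot, lvTop, level] at h
    omega
  · simp [lvRoot, lvOne, lvTop] at h

theorem rewiredGraph_dist_lvRoot_lvTop (hd : 1 ≤ d) {a b j k : Fin γ}
    (h : (rewiredGraph γ d a b).Adj (lvOne γ d k) (lvTop γ d j)) :
    (rewiredGraph γ d a b).dist (lvRoot γ d) (lvTop γ d j) = 2 :=
  dist_eq_two_of_not_adj (by simp [lvRoot, lvTop]) (rewiredGraph_not_adj_lvRoot_lvTop hd a b j)
    (rewiredGraph_adj_of_level_succ rfl) h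

end LayeredGraph

theorem layeredTree_not_approx_BFS_of_rewired_general (γ d : ℕ) (hd : 1 ≤ d)
    (a b : Fin γ) :
    (layeredTree γ d ≤ rewiredGraph γ d a b ∧ (layeredTree γ d).IsTree) ∧
      ((rewiredGraph γ d a b).dist (lvRoot γ d) (lvTop γ d a) = 2 ∧
        (rewiredGraph γ d a b).dist (lvRoot γ d) (lvTop γ d b) = 2) ∧
      ((layeredTree γ d).dist (lvRoot γ d) (lvTop γ d a) = 2 * d + 1 ∧
        ((layeredTree γ d).dist (lvRoot γ d) (lvTop γ d a) : ℝ) >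
          (d : ℝ) * ((rewiredGraph γ d a b).dist (lvRoot γ d) (lvTop γ d a) : ℝ) ∧
        ¬ (∀ w : LayerVert γ d,
            ((layeredTree γ d).dist (lvRoot γ d) w : ℝ) ≤
              (d : ℝ) * ((rewiredGraph γ d a b).dist (lvRoot γ d) w : ℝ))) := by
  have hγ : 0 < γ := a.pos
  have hdist_a := rewiredGraph_dist_lvRoot_lvTop hd (rewiredGraph_adj_cross a b).2
  have hdist_b := rewiredGraph_dist_lvRoot_lvTop hd (rewiredGraph_adj_cross a b).1
  have htree_a : (layeredTree γ d).dist (lvRoot γ d) (lvTop γ d a) = 2 * d + 1 :=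
    layeredTree_dist_lvRoot hγ hd _
  have hgap : ((layeredTree γ d).dist (lvRoot γ d) (lvTop γ d a) : ℝ) >
      (d : ℝ) * ((rewiredGraph γ d a b).dist (lvRoot γ d) (lvTop γ d a) : ℝ) := by
    rw [htree_a, hdist_a]
    push_cast
    linarith
  exact ⟨⟨layeredTree_le_rewiredGraph a b, layeredTree_connected hγ hd,
    layeredTree_isAcyclic hd⟩, ⟨hdist_a, hdist_b⟩, htree_a, hgap,
    fun h => (h _).not_gt hgap⟩

/-- For integers `d ≥ 1`, `γ ≥ 2` and indices `a < b`, the tree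
`T = layeredTree γ d` is still a spanning tree of the rewired graph `H'`, the rewired graph
satisfies `dist_{H'}(u⁰, u^{2d+1}_a) = dist_{H'}(u⁰, u^{2d+1}_b) = 2`, while
`dist_T(u⁰, u^{2d+1}_a) = 2d + 1 > d · dist_{H'}(u⁰, u^{2d+1}_a)`; hence `T` is not a
`d`-approximate BFS tree of `H'`. -/
theorem layeredTree_not_approx_BFS_of_rewired (γ d : ℕ) (hd : 1 ≤ d) (hγ : 2 ≤ γ)
    (a b : Fin γ) (hab : a < b) :
    (layeredTree γ d ≤ rewiredGraph γ d a b ∧ (layeredTree γ d).IsTree) ∧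
      ((rewiredGraph γ d a b).dist (lvRoot γ d) (lvTop γ d a) = 2 ∧
        (rewiredGraph γ d a b).dist (lvRoot γ d) (lvTop γ d b) = 2) ∧
      ((layeredTree γ d).dist (lvRoot γ d) (lvTop γ d a) = 2 * d + 1 ∧
        ((layeredTree γ d).dist (lvRoot γ d) (lvTop γ d a) : ℝ) >
          (d : ℝ) * ((rewiredGraph γ d a b).dist (lvRoot γ d) (lvTop γ d a) : ℝ) ∧
        ¬ (∀ w : LayerVert γ d,
            ((layeredTree γ d).dist (lvRoot γ d) w : ℝ) ≤
              (d : ℝ) * ((rewiredGraph γ d a b).dist (lvRoot γ d) w : ℝ))) :=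
  layeredTree_not_approx_BFS_of_rewired_general γ d hd a b
end
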